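/- Define m_{λ,k} = 2^{−λ} ∑_{2^λ ≤ n < 2^{λ+1}} ϑ̃(k,n), where ϑ̃ satisfies ϑ̃(k,2n) = ϑ̃(k,n) + ϑ̃(k−2,n−1), ϑ̃(k,2n+1) = 2ϑ̃(k−1,n), ϑ̃(0,n)=δ_{0,n}, ϑ̃(k,0)=δ_{k,0}, and ϑ̃(k,n)=0 for negative arguments. Then for λ ≥ 1 and k ≥ 0: m_{λ,k} = (1/2)(m_{λ−1,k−2} + 2 m_{λ−1,k−1} + m_{λ−1,k}) + (1/2)δ_{λ,k−1} − δ_{λ,k−2}. -/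

import Mathlib

/-- `s₂`, the binary sum-of-digits function. -/
def s2 (n : ℕ) : ℕ := (Nat.digits 2 n).sum

/-- `ϑ₂(j,n)`: the number of `t ∈ {0,…,n}` with `ν₂(C(n,t)) = j`. -/
def theta2 (j n : ℕ) : ℕ :=
  ((Finset.range (n + 1)).filter (fun t => padicValNat 2 (n.choose t) = j)).card

/-- `ϑ̃(k,n) = ϑ₂(k − s₂(n), n)` if `k ≥ s₂(n)` (and `n ≥ 0`), else `0`. -/
def tth (k n : ℤ) : ℕ :=
  if 0 ≤ n ∧ (s2 n.toNat : ℤ) ≤ k then theta2 (k - s2 n.toNat).toNat n.toNat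
  else 0

/-- `m_{λ,k} = 2^{-λ} ∑_{2^λ ≤ n < 2^{λ+1}} ϑ̃(k,n)`. -/
noncomputable def mCoeff (lam : ℕ) (k : ℤ) : ℚ :=
  (∑ n ∈ Finset.Ico (2 ^ lam) (2 ^ (lam + 1)), (tth k n : ℚ)) / 2 ^ lam

lemma s2_two_mul (n : ℕ) : s2 (2 * n) = s2 n := by
  rcases Nat.eq_zero_or_pos n with h | h
  · simp [h, s2]
  · unfold s2
    rw [Nat.digits_def' (by norm_num : 1 < 2) (by omega)]
    simp [Nat.mul_div_cancel_left _ (by norm_num : 0 < 2), Nat.mul_mod_right]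

lemma s2_two_mul_add_one (n : ℕ) : s2 (2 * n + 1) = s2 n + 1 := by
  unfold s2
  rw [Nat.digits_def' (by norm_num : 1 < 2) (by omega)]
  have h1 : (2 * n + 1) % 2 = 1 := by omega
  have h2 : (2 * n + 1) / 2 = n := by omega
  rw [h1, h2]
  simp [add_comm]

lemma padicValNat_factorial_add_s2 (n : ℕ) :
    padicValNat 2 (Nat.factorial n) + s2 n = n := by
  have := @sub_one_mul_padicValNat_factorial 2 ⟨Nat.prime_two⟩ n
  have h2 := Nat.digit_sum_le 2 n
  unfold s2
  omega

lemma key (n t : ℕ) (ht : t ≤ n) :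
    (s2 t : ℤ) + s2 (n - t) = padicValNat 2 (n.choose t) + s2 n := by
  have hmul : n.choose t * Nat.factorial t * Nat.factorial (n - t) = Nat.factorial n :=
    Nat.choose_mul_factorial_mul_factorial ht
  have hv : padicValNat 2 (n.choose t * Nat.factorial t * Nat.factorial (n - t)) =
      padicValNat 2 (Nat.factorial n) := by rw [hmul]
  rw [padicValNat.mul (p := 2)
      (Nat.mul_ne_zero (Nat.choose_pos ht).ne' (Nat.factorial_ne_zero t))
      (Nat.factorial_ne_zero _),
    padicValNat.mul (p := 2) (Nat.choose_pos ht).ne' (Nat.factorial_ne_zero t)] at hv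
  have h1 := padicValNat_factorial_add_s2 n
  have h2 := padicValNat_factorial_add_s2 t
  have h3 := padicValNat_factorial_add_s2 (n - t)
  omega

/-- `F k m = #{t ∈ [0,m] : s₂(t) + s₂(m−t) = k}`; this equals `ϑ̃(k,m)`. -/
def F (k : ℤ) (m : ℕ) : ℕ :=
  ((Finset.range (m + 1)).filter (fun t => (s2 t : ℤ) + s2 (m - t) = k)).card

lemma tth_eq (k : ℤ) (m : ℕ) : tth k (m : ℤ) = F k m := by
  unfold tth F
  simp only [Int.toNat_natCast, Nat.cast_nonneg, true_and]
  by_cases h : (s2 m : ℤ) ≤ k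
  · rw [if_pos h]
    unfold theta2
    congr 1
    apply Finset.filter_congr
    intro t ht
    simp only [Finset.mem_range, Nat.lt_succ_iff] at ht
    have hk := key m t ht
    constructor
    · intro hpv
      simp only [hpv] at *
      rw [hk, Int.toNat_of_nonneg (by omega)]
      ring
    · intro hs
      have : (padicValNat 2 (m.choose t) : ℤ) = k - s2 m := by omega
      omega
  · rw [if_neg h]
    symm
    rw [Finset.card_eq_zero, Finset.filter_eq_empty_iff]
    intro t ht
    simp only [Finset.mem_range, Nat.lt_succ_iff] at ht
    have hk := key m t ht
    intro hs
    have : (0:ℤ) ≤ padicValNat 2 (m.choose t) := Int.natCast_nonneg _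
    omega

lemma sum_range_even_odd (f : ℕ → ℕ) (n : ℕ) :
    ∑ t ∈ Finset.range n, f t =
      (∑ u ∈ Finset.range ((n + 1) / 2), f (2 * u)) +
        ∑ u ∈ Finset.range (n / 2), f (2 * u + 1) := by
  induction n with
  | zero => simp
  | succ n ih =>
    rw [Finset.sum_range_succ, ih]
    rcases Nat.even_or_odd n with ⟨j, hj⟩ | ⟨j, hj⟩
    · have h1 : (n + 1 + 1) / 2 = j + 1 := by omega
      have h2 : (n + 1) / 2 = j := by omega
      have h3 : n / 2 = j := by omega
      have h4 : n = 2 * j := by omega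
      rw [h1, h2, h3, h4, Finset.sum_range_succ]
      ring
    · have h1 : (n + 1 + 1) / 2 = j + 1 := by omega
      have h2 : (n + 1) / 2 = j + 1 := by omega
      have h3 : n / 2 = j := by omega
      have h4 : n = 2 * j + 1 := by omega
      rw [h1, h2, h3, h4, Finset.sum_range_succ, Finset.sum_range_succ]
      ring

lemma F_even (k : ℤ) (m : ℕ) (hm : 1 ≤ m) : F k (2 * m) = F k m + F (k - 2) (m - 1) := by
  unfold F
  rw [Finset.card_filter, Finset.card_filter, Finset.card_filter, sum_range_even_odd]
  have h1 : (2 * m + 1 + 1) / 2 = m + 1 := by omega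
  have h2 : (2 * m + 1) / 2 = m := by omega
  rw [h1, h2]
  congr 1
  · apply Finset.sum_congr rfl
    intro u hu
    simp only [Finset.mem_range, Nat.lt_succ_iff] at hu
    have e1 : 2 * m - 2 * u = 2 * (m - u) := by omega
    rw [e1, s2_two_mul, s2_two_mul]
  · apply Finset.sum_congr (by rw [Nat.sub_add_cancel hm])
    intro u hu
    simp only [Finset.mem_range] at hu
    have e1 : 2 * m - (2 * u + 1) = 2 * (m - 1 - u) + 1 := by omega
    rw [e1, s2_two_mul_add_one, s2_two_mul_add_one]
    exact if_congr (by push_cast; omega) rfl rfl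

lemma F_odd (k : ℤ) (m : ℕ) : F k (2 * m + 1) = 2 * F (k - 1) m := by
  unfold F
  rw [Finset.card_filter, Finset.card_filter, sum_range_even_odd]
  have h1 : (2 * m + 1 + 1 + 1) / 2 = m + 1 := by omega
  have h2 : (2 * m + 1 + 1) / 2 = m + 1 := by omega
  rw [h1, h2]
  conv_rhs => rw [two_mul]
  congr 1
  · apply Finset.sum_congr rfl
    intro u hu
    simp only [Finset.mem_range, Nat.lt_succ_iff] at hu
    have e1 : 2 * m + 1 - 2 * u = 2 * (m - u) + 1 := by omega
    rw [e1, s2_two_mul, s2_two_mul_add_one]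
    exact if_congr (by push_cast; omega) rfl rfl
  · apply Finset.sum_congr rfl
    intro u hu
    simp only [Finset.mem_range, Nat.lt_succ_iff] at hu
    have e1 : 2 * m + 1 - (2 * u + 1) = 2 * (m - u) := by omega
    rw [e1, s2_two_mul, s2_two_mul_add_one]
    exact if_congr (by push_cast; omega) rfl rfl

lemma F_pow_sub_one (k : ℤ) (lam : ℕ) :
    F k (2 ^ lam - 1) = if k = (lam : ℤ) then 2 ^ lam else 0 := by
  induction lam generalizing k with
  | zero =>
    unfold F
    norm_num
    rw [Finset.filter_singleton]
    by_cases h : k = 0 <;> simp [h, s2, eq_comm]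
  | succ n ih =>
    have e : 2 ^ (n + 1) - 1 = 2 * (2 ^ n - 1) + 1 := by
      have : 1 ≤ 2 ^ n := Nat.one_le_two_pow
      omega
    rw [e, F_odd, ih]
    by_cases h : k - 1 = (n : ℤ)
    · rw [if_pos h, if_pos (by push_cast; omega)]
      ring
    · rw [if_neg h, if_neg (by push_cast; omega)]

lemma sum_shift (g : ℕ → ℕ) (N : ℕ) (hN : 1 ≤ N) :
    (∑ v ∈ Finset.range N, g (N - 1 + v)) + g (2 * N - 1) =
      g (N - 1) + ∑ v ∈ Finset.range N, g (N + v) := by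
  obtain ⟨M, rfl⟩ : ∃ M, N = M + 1 := ⟨N - 1, by omega⟩
  simp only [Nat.add_sub_cancel]
  have L : ∑ v ∈ Finset.range (M + 1), g (M + v) =
      (∑ v ∈ Finset.range M, g (M + 1 + v)) + g M := by
    rw [Finset.sum_range_succ' (fun v => g (M + v)) M]
    have : g (M + 0) = g M := by rw [Nat.add_zero]
    rw [this]
    congr 1
    exact Finset.sum_congr rfl (fun x _ => by rw [show M + (x + 1) = M + 1 + x from by omega])
  have R : ∑ v ∈ Finset.range (M + 1), g (M + 1 + v) =
      (∑ v ∈ Finset.range M, g (M + 1 + v)) + g (M + 1 + M) := Finset.sum_range_succ _ M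
  rw [L, R, show 2 * (M + 1) - 1 = M + 1 + M from by omega]
  omega

lemma sum_split (k : ℤ) (l : ℕ) :
    (∑ u ∈ Finset.range (2 ^ (l + 1)), F k (2 ^ (l + 1) + u))
      + F (k - 2) (2 ^ (l + 1) - 1)
    = (∑ u ∈ Finset.range (2 ^ l), F k (2 ^ l + u))
      + 2 * (∑ u ∈ Finset.range (2 ^ l), F (k - 1) (2 ^ l + u))
      + ((∑ u ∈ Finset.range (2 ^ l), F (k - 2) (2 ^ l + u))
      + F (k - 2) (2 ^ l - 1)) := by
  have hN : 1 ≤ 2 ^ l := Nat.one_le_two_pow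
  rw [sum_range_even_odd (fun u => F k (2 ^ (l + 1) + u)) (2 ^ (l + 1))]
  have h1 : (2 ^ (l + 1) + 1) / 2 = 2 ^ l := by rw [pow_succ]; omega
  have h2 : 2 ^ (l + 1) / 2 = 2 ^ l := by rw [pow_succ]; omega
  rw [h1, h2]
  have heven : ∀ u ∈ Finset.range (2 ^ l),
      F k (2 ^ (l + 1) + 2 * u) = F k (2 ^ l + u) + F (k - 2) (2 ^ l - 1 + u) := by
    intro u _
    have e : 2 ^ (l + 1) + 2 * u = 2 * (2 ^ l + u) := by rw [pow_succ]; ring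
    rw [e, F_even k _ (by omega)]
    congr 2
    omega
  have hodd : ∀ u ∈ Finset.range (2 ^ l),
      F k (2 ^ (l + 1) + (2 * u + 1)) = 2 * F (k - 1) (2 ^ l + u) := by
    intro u _
    have e : 2 ^ (l + 1) + (2 * u + 1) = 2 * (2 ^ l + u) + 1 := by rw [pow_succ]; ring
    rw [e, F_odd]
  rw [Finset.sum_congr rfl heven, Finset.sum_congr rfl hodd, Finset.sum_add_distrib,
    Finset.mul_sum]
  have hsh := sum_shift (F (k - 2)) (2 ^ l) hN
  have e2 : 2 * 2 ^ l = 2 ^ (l + 1) := by rw [pow_succ]; ring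
  rw [e2] at hsh
  rw [← Finset.mul_sum]
  omega

lemma mCoeff_eq (lam : ℕ) (k : ℤ) :
    mCoeff lam k = (∑ u ∈ Finset.range (2 ^ lam), (F k (2 ^ lam + u) : ℚ)) / 2 ^ lam := by
  unfold mCoeff
  congr 1
  have hc1 : (((2 ^ lam : ℕ) : ℤ)) = 2 ^ lam := by push_cast; ring
  have hc2 : (((2 ^ (lam + 1) : ℕ) : ℤ)) = 2 ^ (lam + 1) := by push_cast; ring
  have h : ∑ n ∈ Finset.Ico ((2:ℤ) ^ lam) (2 ^ (lam + 1)), (tth k n : ℚ) =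
      ∑ m ∈ Finset.Ico (2 ^ lam : ℕ) (2 ^ (lam + 1) : ℕ), (F k m : ℚ) := by
    refine Finset.sum_nbij' (fun n => n.toNat) (fun m => (m : ℤ)) ?_ ?_ ?_ ?_ ?_
    · intro a ha
      simp only [Finset.mem_Ico] at *
      omega
    · intro a ha
      simp only [Finset.mem_Ico] at *
      omega
    · intro a ha
      simp only [Finset.mem_Ico] at ha
      show ((a.toNat : ℤ)) = a
      omega
    · intro a _
      simp
    · intro a ha
      simp only [Finset.mem_Ico] at ha
      have h0 : (0:ℤ) ≤ a := le_trans (by positivity) ha.1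
      show (tth k a : ℚ) = (F k a.toNat : ℚ)
      rw [← tth_eq k a.toNat, Int.toNat_of_nonneg h0]
  rw [h, Finset.sum_Ico_eq_sum_range]
  have e : 2 ^ (lam + 1) - 2 ^ lam = 2 ^ lam := by rw [pow_succ]; omega
  rw [e]

theorem mCoeff_recurrence (lam k : ℕ) (hlam : 1 ≤ lam) :
    mCoeff lam k =
      (1 / 2) * (mCoeff (lam - 1) ((k : ℤ) - 2) + 2 * mCoeff (lam - 1) ((k : ℤ) - 1)
        + mCoeff (lam - 1) k)
      + (1 / 2) * (if (lam : ℤ) = (k : ℤ) - 1 then 1 else 0)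
      - (if (lam : ℤ) = (k : ℤ) - 2 then 1 else 0) := by
  obtain ⟨l, rfl⟩ : ∃ l, lam = l + 1 := ⟨lam - 1, by omega⟩
  simp only [Nat.add_sub_cancel]
  rw [mCoeff_eq, mCoeff_eq, mCoeff_eq, mCoeff_eq]
  have hs := sum_split (k : ℤ) l
  have hb1 := F_pow_sub_one ((k : ℤ) - 2) (l + 1)
  have hb2 := F_pow_sub_one ((k : ℤ) - 2) l
  -- cast hs to ℚ
  have hsQ : (∑ u ∈ Finset.range (2 ^ (l + 1)), (F (k : ℤ) (2 ^ (l + 1) + u) : ℚ))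
      + (F ((k : ℤ) - 2) (2 ^ (l + 1) - 1) : ℚ)
      = (∑ u ∈ Finset.range (2 ^ l), (F (k : ℤ) (2 ^ l + u) : ℚ))
      + 2 * (∑ u ∈ Finset.range (2 ^ l), (F ((k : ℤ) - 1) (2 ^ l + u) : ℚ))
      + ((∑ u ∈ Finset.range (2 ^ l), (F ((k : ℤ) - 2) (2 ^ l + u) : ℚ))
      + (F ((k : ℤ) - 2) (2 ^ l - 1) : ℚ)) := by
    exact_mod_cast congrArg (Nat.cast : ℕ → ℚ) hs
  set A := ∑ u ∈ Finset.range (2 ^ (l + 1)), (F (k : ℤ) (2 ^ (l + 1) + u) : ℚ) with hA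
  set B0 := ∑ u ∈ Finset.range (2 ^ l), (F (k : ℤ) (2 ^ l + u) : ℚ) with hB0
  set B1 := ∑ u ∈ Finset.range (2 ^ l), (F ((k : ℤ) - 1) (2 ^ l + u) : ℚ) with hB1
  set B2 := ∑ u ∈ Finset.range (2 ^ l), (F ((k : ℤ) - 2) (2 ^ l + u) : ℚ) with hB2
  have hpow : ((2:ℚ) ^ (l + 1)) ≠ 0 := by positivity
  have hpow' : ((2:ℚ) ^ l) ≠ 0 := by positivity
  by_cases hc1 : ((l:ℤ) + 1) = (k : ℤ) - 1
  · rw [if_pos (by push_cast; omega)]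
    rw [if_neg (by omega)]
    rw [hb2, if_pos (by omega)] at hsQ
    rw [hb1, if_neg (by omega)] at hsQ
    push_cast at hsQ
    rw [show A = B0 + 2 * B1 + (B2 + 2 ^ l) - 0 by linarith]
    field_simp
    ring
  · rw [if_neg (by push_cast; omega)]
    by_cases hc2 : ((l:ℤ) + 1) = (k : ℤ) - 2
    · rw [if_pos (by omega)]
      rw [hb2, if_neg (by omega)] at hsQ
      rw [hb1, if_pos (by omega)] at hsQ
      push_cast at hsQ
      rw [show A = B0 + 2 * B1 + (B2 + 0) - 2 ^ (l + 1) by linarith]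
      field_simp
      ring
    · rw [if_neg (by omega)]
      rw [hb2, if_neg (by omega)] at hsQ
      rw [hb1, if_neg (by omega)] at hsQ
      push_cast at hsQ
      rw [show A = B0 + 2 * B1 + (B2 + 0) - 0 by linarith]
      field_simp
      ring
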